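/- Completeness is preserved by extrapolation: for every timed automaton A, every extrapolation operator extra, and every extra-saturated set N of symbolic states, for every (q, Z) in the set S of reachable symbolic states of A there exists (q, Z'') ∈ N with Z ⊆ Z''. In particular, for every reachable configuration (q,v) there is (q, Z'') ∈ N with v ∈ Z''. -/

import Mathlib

open Classical

namespace Timed

/-- A clock valuation assigns a nonnegative real to every clock. -/
abbrev Val (X : Type) := X → NNReal

/-- Time elapse on valuations: `(v+δ)(x) = v(x)+δ`. -/
noncomputable def addVal {X : Type} (v : Val X) (δ : NNReal) : Val X := fun x => v x + δ

/-- Reset of the clocks in `Y` to `0`. -/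
noncomputable def resetVal {X : Type} (Y : Set X) (v : Val X) : Val X :=
  fun x => if x ∈ Y then 0 else v x

/-- Comparison operators `<, ≤, =, ≥, >`. -/
inductive CmpOp | lt | le | eq | ge | gt

def CmpOp.holds : CmpOp → ℝ → ℝ → Prop
  | .lt, a, b => a < b
  | .le, a, b => a ≤ b
  | .eq, a, b => a = b
  | .ge, a, b => a ≥ b
  | .gt, a, b => a > b

/-- Clock constraints: finite conjunctions of `x ⋈ c` and `x - y ⋈ c` (and `true`). -/
inductive ClockConstraint (X : Type) where
  | tt : ClockConstraint X
  | single : X → CmpOp → ℤ → ClockConstraint X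
  | diag : X → X → CmpOp → ℤ → ClockConstraint X
  | conj : ClockConstraint X → ClockConstraint X → ClockConstraint X

def ClockConstraint.sat {X : Type} (v : Val X) : ClockConstraint X → Prop
  | .tt => True
  | .single x op c => op.holds (v x : ℝ) (c : ℝ)
  | .diag x y op c => op.holds ((v x : ℝ) - (v y : ℝ)) (c : ℝ)
  | .conj g₁ g₂ => g₁.sat v ∧ g₂.sat v

/-- `⟦g⟧`, the set of valuations satisfying `g`. -/
def sem {X : Type} (g : ClockConstraint X) : Set (Val X) := {v | g.sat v}

/-- A zone is a set of valuations definable by a clock constraint. -/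
def IsZone {X : Type} (Z : Set (Val X)) : Prop := ∃ g : ClockConstraint X, Z = sem g

/-- Future (time elapse) of a set of valuations. -/
def future {X : Type} (W : Set (Val X)) : Set (Val X) :=
  {w | ∃ v ∈ W, ∃ δ : NNReal, w = addVal v δ}

/-- Reset of a set of valuations: `[Y]W`. -/
def resetSet {X : Type} (Y : Set X) (W : Set (Val X)) : Set (Val X) :=
  resetVal Y '' W

/-- A timed automaton `(Q, X, q₀, T, F)`. -/
structure Automaton (Q X : Type) where
  init : Q
  trans : Set (Q × ClockConstraint X × Set X × Q)
  final : Set Q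

/-- `Post_t(W) = {v' : ∃ v ∈ W, ∃ δ ≥ 0, v ⊨ g ∧ v' = [Y]v + δ}` for `t = (q,g,Y,q')`. -/
def Post {Q X : Type} (t : Q × ClockConstraint X × Set X × Q) (W : Set (Val X)) :
    Set (Val X) :=
  {w | ∃ v ∈ W, ∃ δ : NNReal, t.2.1.sat v ∧ w = addVal (resetVal t.2.2.1 v) δ}

/-- The zero valuation. -/
def zeroVal (X : Type) : Val X := fun _ => 0

/-- One step of the semantics: a time elapse or a discrete transition. -/
inductive Step {Q X : Type} (A : Automaton Q X) : (Q × Val X) → (Q × Val X) → Prop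
  | delay (q : Q) (v : Val X) (δ : NNReal) : Step A (q, v) (q, addVal v δ)
  | disc {q : Q} {v : Val X} {g : ClockConstraint X} {R : Set X} {q₁ : Q}
      (ht : (q, g, R, q₁) ∈ A.trans) (hg : g.sat v) :
      Step A (q, v) (q₁, resetVal R v)

/-- A configuration is reachable if some finite run from `(q₀, 0)` ends in it. -/
def Reachable {Q X : Type} (A : Automaton Q X) (c : Q × Val X) : Prop :=
  Relation.ReflTransGen (Step A) (A.init, zeroVal X) c

/-- The initial zone `Z₀ = future {0}`. -/
def initZone (X : Type) : Set (Val X) := future {zeroVal X}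

/-- The set `S` of reachable symbolic states: least set containing `(q₀, Z₀)` and
closed under nonempty `Post`. -/
inductive SymbReach {Q X : Type} (A : Automaton Q X) : Q × Set (Val X) → Prop
  | init : SymbReach A (A.init, initZone X)
  | step {q : Q} {Z : Set (Val X)} {g : ClockConstraint X} {Y : Set X} {q' : Q}
      (h : SymbReach A (q, Z)) (ht : (q, g, Y, q') ∈ A.trans)
      (hne : Post (q, g, Y, q') Z ≠ ∅) :
      SymbReach A (q', Post (q, g, Y, q') Z)

/-- `N` is saturated w.r.t. the extrapolation operator `extra`. -/
def ExtraSaturated {Q X : Type} (A : Automaton Q X)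
    (extra : Q → Set (Val X) → Set (Val X)) (N : Set (Q × Set (Val X))) : Prop :=
  (∃ Z'', (A.init, Z'') ∈ N ∧ extra A.init (initZone X) ⊆ Z'') ∧
  ∀ q Z, (q, Z) ∈ N → ∀ g Y q', (q, g, Y, q') ∈ A.trans →
    Post (q, g, Y, q') Z ≠ ∅ →
    ∃ Z'', (q', Z'') ∈ N ∧ extra q' (Post (q, g, Y, q') Z) ⊆ Z''

/-- A `K`-bounded clock constraint: every `x ⋈ c` has `-K x ≤ c ≤ K x` and
every `x - y ⋈ c` has `-K y ≤ c ≤ K x`. -/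
def KBounded {X : Type} (K : X → ℕ) : ClockConstraint X → Prop
  | .tt => True
  | .single x _ c => -(K x : ℤ) ≤ c ∧ c ≤ (K x : ℤ)
  | .diag x y _ c => -(K y : ℤ) ≤ c ∧ c ≤ (K x : ℤ)
  | .conj g₁ g₂ => KBounded K g₁ ∧ KBounded K g₂

/-- A `K`-bounded zone. -/
def IsKBoundedZone {X : Type} (K : X → ℕ) (Z : Set (Val X)) : Prop :=
  ∃ g : ClockConstraint X, KBounded K g ∧ Z = sem g

/-- An `LU`-bounded clock constraint: every `x ⋈ c` has `-U x ≤ c ≤ L x` and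
every `x - y ⋈ c` has `-U y ≤ c ≤ L x`. -/
def LUBounded {X : Type} (L U : X → ℕ) : ClockConstraint X → Prop
  | .tt => True
  | .single x _ c => -(U x : ℤ) ≤ c ∧ c ≤ (L x : ℤ)
  | .diag x y _ c => -(U y : ℤ) ≤ c ∧ c ≤ (L x : ℤ)
  | .conj g₁ g₂ => LUBounded L U g₁ ∧ LUBounded L U g₂

/-- An `LU`-bounded zone. -/
def IsLUBoundedZone {X : Type} (L U : X → ℕ) (Z : Set (Val X)) : Prop :=
  ∃ g : ClockConstraint X, LUBounded L U g ∧ Z = sem g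

/-- A diagonal-free clock constraint. -/
def DiagFree {X : Type} : ClockConstraint X → Prop
  | .tt => True
  | .single _ _ _ => True
  | .diag _ _ _ _ => False
  | .conj g₁ g₂ => DiagFree g₁ ∧ DiagFree g₂

/-- Every atomic constraint `x ⋈ c` of the guard satisfies `c ≤ K x`. -/
def GuardKBounded {X : Type} (K : X → ℕ) : ClockConstraint X → Prop
  | .tt => True
  | .single x _ c => c ≤ (K x : ℤ)
  | .diag _ _ _ _ => True
  | .conj g₁ g₂ => GuardKBounded K g₁ ∧ GuardKBounded K g₂

/-- `LU`-boundedness of guards: `x < c`, `x ≤ c` need `c ≤ U x`; `x > d`, `x ≥ d`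
need `d ≤ L x`; `x = c` needs both. -/
def GuardLUBounded {X : Type} (L U : X → ℕ) : ClockConstraint X → Prop
  | .tt => True
  | .single x op c =>
      match op with
      | .lt => c ≤ (U x : ℤ)
      | .le => c ≤ (U x : ℤ)
      | .gt => c ≤ (L x : ℤ)
      | .ge => c ≤ (L x : ℤ)
      | .eq => c ≤ (U x : ℤ) ∧ c ≤ (L x : ℤ)
  | .diag _ _ _ _ => True
  | .conj g₁ g₂ => GuardLUBounded L U g₁ ∧ GuardLUBounded L U g₂

/-- A (strong timed) simulation: a preorder relating only configurations with the same
state, compatible with time elapses and discrete transitions. -/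
def IsSimulation {Q X : Type} (A : Automaton Q X)
    (R : (Q × Val X) → (Q × Val X) → Prop) : Prop :=
  (∀ c, R c c) ∧
  (∀ c₁ c₂ c₃, R c₁ c₂ → R c₂ c₃ → R c₁ c₃) ∧
  (∀ c c', R c c' → c.1 = c'.1) ∧
  (∀ q v v', R (q, v) (q, v') →
    (∀ δ : NNReal, R (q, addVal v δ) (q, addVal v' δ)) ∧
    (∀ g Y q₁, (q, g, Y, q₁) ∈ A.trans → g.sat v →
      g.sat v' ∧ R (q₁, resetVal Y v) (q₁, resetVal Y v')))

/-- Labels of run steps: a delay, or a discrete transition. -/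
inductive RunLabel (Q X : Type) where
  | delay : NNReal → RunLabel Q X
  | disc : Q × ClockConstraint X × Set X × Q → RunLabel Q X

/-- Finite runs with an explicit sequence of delays and transitions. -/
inductive LRun {Q X : Type} (A : Automaton Q X) :
    (Q × Val X) → List (RunLabel Q X) → (Q × Val X) → Prop
  | refl (c : Q × Val X) : LRun A c [] c
  | delay {q : Q} {v : Val X} (δ : NNReal) {l : List (RunLabel Q X)} {c' : Q × Val X}
      (h : LRun A (q, addVal v δ) l c') : LRun A (q, v) (RunLabel.delay δ :: l) c'
  | disc {q : Q} {v : Val X} {g : ClockConstraint X} {Y : Set X} {q₁ : Q}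
      {l : List (RunLabel Q X)} {c' : Q × Val X}
      (ht : (q, g, Y, q₁) ∈ A.trans) (hg : g.sat v)
      (h : LRun A (q₁, resetVal Y v) l c') :
      LRun A (q, v) (RunLabel.disc (q, g, Y, q₁) :: l) c'

/-- `N` is saturated w.r.t. the simulation `R`. -/
def SimSaturated {Q X : Type} (A : Automaton Q X)
    (R : (Q × Val X) → (Q × Val X) → Prop) (N : Set (Q × Set (Val X))) : Prop :=
  (∃ Z'', (A.init, Z'') ∈ N ∧ ∀ v ∈ initZone X, ∃ v' ∈ Z'', R (A.init, v) (A.init, v')) ∧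
  ∀ q Z, (q, Z) ∈ N → ∀ g Y q', (q, g, Y, q') ∈ A.trans →
    Post (q, g, Y, q') Z ≠ ∅ →
    ∃ Z'', (q', Z'') ∈ N ∧ ∀ v ∈ Post (q, g, Y, q') Z, ∃ v' ∈ Z'', R (q', v) (q', v')

/-- Atomic constraints, allowing the zero clock `x₀` on the left of a difference. -/
inductive Atom (X : Type) where
  | single : X → CmpOp → ℤ → Atom X
  | negSingle : X → CmpOp → ℤ → Atom X    -- `x₀ - y ⋈ c`
  | diag : X → X → CmpOp → ℤ → Atom X

def Atom.sat {X : Type} (v : Val X) : Atom X → Prop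
  | .single x op c => op.holds (v x : ℝ) (c : ℝ)
  | .negSingle y op c => op.holds (-(v y : ℝ)) (c : ℝ)
  | .diag x y op c => op.holds ((v x : ℝ) - (v y : ℝ)) (c : ℝ)

/-- `pre(φ, Y)` of an atomic constraint w.r.t. a reset set `Y`. -/
noncomputable def preAtom {X : Type} (Y : Set X) : Atom X → Set (Atom X)
  | .single x op c => if x ∈ Y then ∅ else {Atom.single x op c}
  | .negSingle y op c => if y ∈ Y then ∅ else {Atom.negSingle y op c}
  | .diag x y op c =>
      if x ∈ Y then (if y ∈ Y then ∅ else {Atom.negSingle y op c})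
      else (if y ∈ Y then {Atom.single x op c} else {Atom.diag x y op c})

/-- The set of atomic constraints of a guard. -/
def atomsOf {X : Type} : ClockConstraint X → Set (Atom X)
  | .tt => ∅
  | .single x op c => {Atom.single x op c}
  | .diag x y op c => {Atom.diag x y op c}
  | .conj g₁ g₂ => atomsOf g₁ ∪ atomsOf g₂

/-- One step of the fixpoint equations defining the constraint map `G`. -/
noncomputable def cmapStep {Q X : Type} (A : Automaton Q X)
    (G : Q → Set (Atom X)) (q : Q) : Set (Atom X) :=
  {φ | ∃ g Y q', (q, g, Y, q') ∈ A.trans ∧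
        (φ ∈ atomsOf g ∨ ∃ ψ ∈ G q', φ ∈ preAtom Y ψ)}

/-- The `G`-preorder: `(q,v) ≼_G (q,v')` iff for all `δ` and all `φ ∈ G q`,
`v+δ ⊨ φ` implies `v'+δ ⊨ φ` (only configurations with the same state are related). -/
def GPre {Q X : Type} (G : Q → Set (Atom X)) (c c' : Q × Val X) : Prop :=
  c.1 = c'.1 ∧
  ∀ δ : NNReal, ∀ φ ∈ G c.1, Atom.sat (addVal c.2 δ) φ → Atom.sat (addVal c'.2 δ) φ

end Timed
open Timed

/-!
If `Z ⊆ Z''` with `(q, Z'') ∈ N`, then `Post_t Z ⊆ Post_t Z'' ⊆ extra (Post_t Z'')`, and saturation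
puts the last set inside some `(q', Z₃) ∈ N`; induction along `S` gives the symbolic claim, and
reachable configurations lie in reachable symbolic states because these are closed under time
elapse. The inclusion `Post_t Z'' ⊆ extra (Post_t Z'')` is only granted for zones, so the real work
is that zones are closed under `Post_t`. Guards are conjunctions, while resets and time elapse are
projections along one real variable of a system of difference bounds; Fourier–Motzkin elimination
computes such a projection, and it is exact because the bounds on the eliminated variable are
half-lines, for which Helly's theorem on the line reduces everything to pairs.
-/

theorem Real.biInter_nonempty_of_pairwise {ι : Type} {F : ι → Set ℝ} {s : Finset ι}
    (hconv : ∀ i ∈ s, Convex ℝ (F i)) (hpair : ∀ i ∈ s, ∀ j ∈ s, (F i ∩ F j).Nonempty) :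
    (⋂ i ∈ s, F i).Nonempty := by
  refine Convex.helly_theorem' hconv fun I hIs hcard => ?_
  rw [Module.finrank_self] at hcard
  obtain h | h | h : I.card = 0 ∨ I.card = 1 ∨ I.card = 2 := by omega
  · simp [Finset.card_eq_zero.1 h]
  · obtain ⟨i, rfl⟩ := Finset.card_eq_one.1 h
    have hi := hIs (Finset.mem_singleton_self i)
    simpa using hpair i hi i hi
  · obtain ⟨i, j, -, rfl⟩ := Finset.card_eq_two.1 h
    simpa using hpair i (hIs (by simp)) j (hIs (by simp))

lemma Option.elim_elim'_eq_elim_join {V : Type} {a : Option (Option V)} (ha : a ≠ some none)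
    (r : ℝ) (w : V → ℝ) : a.elim 0 (Option.elim' r w) = a.join.elim 0 w := by
  rcases a with _ | _ | x
  · rfl
  · exact absurd rfl ha
  · rfl

namespace Timed

def LtOrLe (strict : Bool) (a b : ℝ) : Prop := if strict then a < b else a ≤ b

namespace LtOrLe

variable {s t : Bool} {a b c c' : ℝ}

lemma of_lt (h : a < b) : LtOrLe s a b := by
  cases s
  · exact h.le
  · exact h

lemma mono (hab : a ≤ b) (h : LtOrLe s b c) : LtOrLe s a c := by
  cases s
  · exact hab.trans h
  · exact hab.trans_lt h

lemma add (h : LtOrLe s a c) (h' : LtOrLe t b c') : LtOrLe (s || t) (a + b) (c + c') := by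
  cases s <;> cases t <;> simp [LtOrLe] at h h' ⊢ <;> linarith

lemma exists_split (h : LtOrLe (s || t) (a - b) (c + c')) :
    ∃ r, LtOrLe s (a - r) c ∧ LtOrLe t (r - b) c' := by
  refine ⟨(a - c + b + c') / 2, ?_, ?_⟩ <;>
    cases s <;> cases t <;> simp [LtOrLe] at h ⊢ <;> linarith

end LtOrLe

/-- The bound `lhs - rhs < bound` (if `strict`) or `lhs - rhs ≤ bound`, where the side `none`
stands for the constant `0`. -/
structure DiffBound (V : Type) where
  lhs : Option V
  rhs : Option V
  strict : Bool
  bound : ℤ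

namespace DiffBound

variable {V : Type}

def Holds (d : DiffBound V) (w : V → ℝ) : Prop :=
  LtOrLe d.strict (d.lhs.elim 0 w - d.rhs.elim 0 w) d.bound

def trans (d e : DiffBound V) : DiffBound V :=
  ⟨d.lhs, e.rhs, d.strict || e.strict, d.bound + e.bound⟩

lemma Holds.trans {d e : DiffBound V} {w : V → ℝ} (hde : d.rhs = e.lhs) (hd : d.Holds w)
    (he : e.Holds w) : (d.trans e).Holds w := by
  have := hd.add he
  rw [hde, sub_add_sub_cancel] at this
  simpa [DiffBound.trans, Holds] using this

def map {W : Type} (f : V → W) (d : DiffBound V) : DiffBound W :=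
  ⟨d.lhs.map f, d.rhs.map f, d.strict, d.bound⟩

lemma holds_map {W : Type} (f : V → W) (d : DiffBound V) (u : W → ℝ) :
    (d.map f).Holds u ↔ d.Holds (u ∘ f) := by
  obtain ⟨_ | _, _ | _, s, c⟩ := d <;> rfl

end DiffBound

section Eliminate

variable {V : Type}

namespace DiffBound

def restrict (d : DiffBound (Option V)) : DiffBound V :=
  ⟨d.lhs.join, d.rhs.join, d.strict, d.bound⟩

/-- An upper bound `r - b ◁ c` on the variable `r = none : Option V`, which occurs in a bound as
the side `some none`. -/
def IsUpper (d : DiffBound (Option V)) : Prop := d.lhs = some none ∧ d.rhs ≠ some none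

def IsLower (d : DiffBound (Option V)) : Prop := d.rhs = some none ∧ d.lhs ≠ some none

end DiffBound

open DiffBound

/-- Fourier–Motzkin elimination of the variable `none : Option V`. -/
noncomputable def eliminate (S : Finset (DiffBound (Option V))) : Finset (DiffBound V) :=
  (S.filter fun d => ¬d.IsUpper ∧ ¬d.IsLower).image restrict ∪
    Finset.image₂ (fun l u => (l.trans u).restrict) (S.filter IsLower) (S.filter IsUpper)

variable {d : DiffBound (Option V)} {w : V → ℝ} {r : ℝ}

lemma DiffBound.holds_restrict_iff (hu : ¬d.IsUpper) (hl : ¬d.IsLower) :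
    d.restrict.Holds w ↔ d.Holds (Option.elim' r w) := by
  by_cases hlhs : d.lhs = some none
  · have hrhs : d.rhs = some none := not_not.1 fun h => hu ⟨hlhs, h⟩
    simp [Holds, restrict, hlhs, hrhs]
  · have hrhs : d.rhs ≠ some none := fun h => hl ⟨h, hlhs⟩
    simp [Holds, restrict, Option.elim_elim'_eq_elim_join hlhs,
      Option.elim_elim'_eq_elim_join hrhs]

lemma DiffBound.IsUpper.holds_iff (hd : d.IsUpper) :
    d.Holds (Option.elim' r w) ↔ LtOrLe d.strict (r - d.rhs.join.elim 0 w) d.bound := by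
  simp [Holds, hd.1, Option.elim_elim'_eq_elim_join hd.2]

lemma DiffBound.IsLower.holds_iff (hd : d.IsLower) :
    d.Holds (Option.elim' r w) ↔ LtOrLe d.strict (d.lhs.join.elim 0 w - r) d.bound := by
  simp [Holds, hd.1, Option.elim_elim'_eq_elim_join hd.2]

lemma LtOrLe.convex_setOf_of_monotone {s : Bool} {c : ℝ} {f : ℝ → ℝ} (hf : Monotone f) :
    Convex ℝ {r | LtOrLe s (f r) c} :=
  (show IsLowerSet {r | LtOrLe s (f r) c} from
    fun _ _ hba ha => LtOrLe.mono (hf hba) ha).ordConnected.convex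

lemma LtOrLe.convex_setOf_of_antitone {s : Bool} {c : ℝ} {f : ℝ → ℝ} (hf : Antitone f) :
    Convex ℝ {r | LtOrLe s (f r) c} :=
  (show IsUpperSet {r | LtOrLe s (f r) c} from
    fun _ _ hab ha => LtOrLe.mono (hf hab) ha).ordConnected.convex

lemma DiffBound.convex_setOf_holds (hd : d.IsUpper ∨ d.IsLower) :
    Convex ℝ {r | d.Holds (Option.elim' r w)} := by
  rcases hd with hd | hd
  · simp_rw [hd.holds_iff]
    exact LtOrLe.convex_setOf_of_monotone fun _ _ h => sub_le_sub_right h _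
  · simp_rw [hd.holds_iff]
    exact LtOrLe.convex_setOf_of_antitone fun _ _ h => sub_le_sub_left h _

variable {S : Finset (DiffBound (Option V))}

lemma exists_holds_of_isUpper_of_isLower (h : ∀ d ∈ eliminate S, d.Holds w)
    {u l : DiffBound (Option V)} (hu : u ∈ S) (hu' : u.IsUpper) (hl : l ∈ S) (hl' : l.IsLower) :
    ∃ r, u.Holds (Option.elim' r w) ∧ l.Holds (Option.elim' r w) := by
  have hmem : (l.trans u).restrict ∈ eliminate S :=
    Finset.mem_union_right _ (Finset.mem_image₂_of_mem (by simp [hl, hl']) (by simp [hu, hu']))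
  have hcomb := h _ hmem
  simp only [Holds, restrict, DiffBound.trans, Int.cast_add] at hcomb
  obtain ⟨r, hlr, hur⟩ := LtOrLe.exists_split hcomb
  exact ⟨r, hu'.holds_iff.2 hur, hl'.holds_iff.2 hlr⟩

lemma exists_holds_pair (h : ∀ d ∈ eliminate S, d.Holds w) {d e : DiffBound (Option V)}
    (hd : d ∈ S) (hd' : d.IsUpper ∨ d.IsLower) (he : e ∈ S) (he' : e.IsUpper ∨ e.IsLower) :
    ∃ r, d.Holds (Option.elim' r w) ∧ e.Holds (Option.elim' r w) := by
  rcases hd' with hd' | hd' <;> rcases he' with he' | he'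
  · simp_rw [hd'.holds_iff, he'.holds_iff]
    set a := d.rhs.join.elim 0 w + d.bound
    set b := e.rhs.join.elim 0 w + e.bound
    exact ⟨min a b - 1, LtOrLe.of_lt (by linarith [min_le_left a b]),
      LtOrLe.of_lt (by linarith [min_le_right a b])⟩
  · exact exists_holds_of_isUpper_of_isLower h hd hd' he he'
  · exact (exists_holds_of_isUpper_of_isLower h he he' hd hd').imp fun _ => And.symm
  · simp_rw [hd'.holds_iff, he'.holds_iff]
    set a := d.lhs.join.elim 0 w - d.bound
    set b := e.lhs.join.elim 0 w - e.bound
    exact ⟨max a b + 1, LtOrLe.of_lt (by linarith [le_max_left a b]),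
      LtOrLe.of_lt (by linarith [le_max_right a b])⟩

theorem holds_eliminate_iff :
    (∀ d ∈ eliminate S, d.Holds w) ↔ ∃ r, ∀ d ∈ S, d.Holds (Option.elim' r w) := by
  constructor
  · intro h
    obtain ⟨r, hr⟩ := Real.biInter_nonempty_of_pairwise
      (F := fun d => {r | d.Holds (Option.elim' r w)})
      (s := S.filter fun d => d.IsUpper ∨ d.IsLower)
      (fun d hd => convex_setOf_holds (Finset.mem_filter.1 hd).2) fun d hd e he => by
        rw [Finset.mem_filter] at hd he
        obtain ⟨r, hdr, her⟩ := exists_holds_pair h hd.1 hd.2 he.1 he.2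
        exact ⟨r, hdr, her⟩
    simp only [Set.mem_iInter] at hr
    refine ⟨r, fun d hd => ?_⟩
    by_cases hbound : d.IsUpper ∨ d.IsLower
    · exact hr d (Finset.mem_filter.2 ⟨hd, hbound⟩)
    · rw [not_or] at hbound
      exact (holds_restrict_iff hbound.1 hbound.2).1
        (h _ (Finset.mem_union_left _ (Finset.mem_image_of_mem _ (by simp [hd, hbound]))))
  · rintro ⟨r, hr⟩ d hd
    simp only [eliminate, Finset.mem_union, Finset.mem_image, Finset.mem_image₂,
      Finset.mem_filter] at hd
    rcases hd with ⟨d, ⟨hdS, hu, hl⟩, rfl⟩ | ⟨l, ⟨hlS, hl⟩, u, ⟨huS, hu⟩, rfl⟩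
    · exact (holds_restrict_iff hu hl).2 (hr d hdS)
    · exact (holds_restrict_iff (d := l.trans u) (fun h => hl.2 h.1) (fun h => hu.2 h.1)).2
        ((hr l hlS).trans (hl.1.trans hu.1.symm) (hr u huS))

def DiffBound.freshNonneg : DiffBound (Option V) := ⟨none, some none, false, 0⟩

lemma DiffBound.holds_freshNonneg_iff {r : ℝ} {w : V → ℝ} :
    (freshNonneg : DiffBound (Option V)).Holds (Option.elim' r w) ↔ 0 ≤ r := by
  simp [freshNonneg, Holds, LtOrLe]

end Eliminate

section Zones

variable {X : Type}

def DiffBound.zone (S : Finset (DiffBound X)) : Set (Val X) :=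
  {v | ∀ d ∈ S, d.Holds fun x => (v x : ℝ)}

/-- Unlike `IsZone`, this also covers the empty set when there are no clocks. -/
def IsDiffZone (W : Set (Val X)) : Prop := ∃ S : Finset (DiffBound X), W = DiffBound.zone S

namespace DiffBound

lemma zone_union (S T : Finset (DiffBound X)) : zone (S ∪ T) = zone S ∩ zone T := by
  ext v
  simp only [zone, Finset.mem_union, Set.mem_ofPred_eq, Set.mem_inter_iff, or_imp, forall_and]

noncomputable def ofCmp (a b : Option X) : CmpOp → ℤ → Finset (DiffBound X)
  | .lt, c => {⟨a, b, true, c⟩}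
  | .le, c => {⟨a, b, false, c⟩}
  | .eq, c => {⟨a, b, false, c⟩, ⟨b, a, false, -c⟩}
  | .ge, c => {⟨b, a, false, -c⟩}
  | .gt, c => {⟨b, a, true, -c⟩}

lemma forall_holds_ofCmp_iff (a b : Option X) (op : CmpOp) (c : ℤ) (w : X → ℝ) :
    (∀ d ∈ ofCmp a b op c, d.Holds w) ↔ op.holds (a.elim 0 w - b.elim 0 w) c := by
  cases op <;> simp [ofCmp, Holds, LtOrLe, CmpOp.holds] <;> constructor <;> intros <;>
    first | linarith | (constructor <;> linarith)

noncomputable def ofConstraint : ClockConstraint X → Finset (DiffBound X)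
  | .tt => ∅
  | .single x op c => ofCmp (some x) none op c
  | .diag x y op c => ofCmp (some x) (some y) op c
  | .conj g₁ g₂ => ofConstraint g₁ ∪ ofConstraint g₂

lemma sem_eq_zone_ofConstraint (g : ClockConstraint X) : sem g = zone (ofConstraint g) := by
  induction g with
  | tt => ext v; simp [sem, ClockConstraint.sat, zone, ofConstraint]
  | single x op c =>
    ext v
    simpa [sem, ClockConstraint.sat, zone, ofConstraint] using
      (forall_holds_ofCmp_iff (some x) none op c fun x => (v x : ℝ)).symm
  | diag x y op c =>
    ext v
    simpa [sem, ClockConstraint.sat, zone, ofConstraint] using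
      (forall_holds_ofCmp_iff (some x) (some y) op c fun x => (v x : ℝ)).symm
  | conj g₁ g₂ ih₁ ih₂ =>
    rw [ofConstraint, zone_union, ← ih₁, ← ih₂]
    rfl

def toConstraint (d : DiffBound X) : ClockConstraint X :=
  match d.lhs, d.rhs with
  | some x, some y => .diag x y (if d.strict then .lt else .le) d.bound
  | some x, none => .single x (if d.strict then .lt else .le) d.bound
  | none, some y => .single y (if d.strict then .gt else .ge) (-d.bound)
  | none, none => .tt

lemma sem_toConstraint {d : DiffBound X} {w : X → ℝ} (hd : d.Holds w) :
    sem d.toConstraint = zone {d} := by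
  obtain ⟨_ | x, _ | y, _ | _, c⟩ := d <;> ext v <;>
    simp [toConstraint, sem, ClockConstraint.sat, zone, Holds, LtOrLe, CmpOp.holds] at hd ⊢ <;>
    first | exact hd | (constructor <;> intro <;> linarith)

end DiffBound

lemma IsZone.isDiffZone {Z : Set (Val X)} (h : IsZone Z) : IsDiffZone Z := by
  obtain ⟨g, rfl⟩ := h
  exact ⟨_, DiffBound.sem_eq_zone_ofConstraint g⟩

lemma IsDiffZone.isZone {W : Set (Val X)} (h : IsDiffZone W) (hne : W.Nonempty) : IsZone W := by
  obtain ⟨S, rfl⟩ := h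
  obtain ⟨v, hv⟩ := hne
  suffices ∀ T ⊆ S, IsZone (DiffBound.zone T) from this S subset_rfl
  intro T
  induction T using Finset.induction_on with
  | empty => exact fun _ => ⟨.tt, by ext; simp [sem, ClockConstraint.sat, DiffBound.zone]⟩
  | insert d T _ ih =>
    intro hTS
    obtain ⟨g, hg⟩ := ih ((Finset.subset_insert d T).trans hTS)
    refine ⟨.conj d.toConstraint g, ?_⟩
    rw [Finset.insert_eq, DiffBound.zone_union, hg,
      ← DiffBound.sem_toConstraint (hv d (hTS (Finset.mem_insert_self d T)))]
    rfl

namespace DiffBound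

lemma holds_le_zero_iff (x : X) (v : Val X) :
    (⟨some x, none, false, 0⟩ : DiffBound X).Holds (fun y => (v y : ℝ)) ↔ v x = 0 := by
  simp only [Holds, LtOrLe, Option.elim_some, Option.elim_none, sub_zero, Int.cast_zero,
    Bool.false_eq_true, if_false]
  norm_cast
  exact nonpos_iff_eq_zero

lemma elim'_comp_rename (x : X) (r : ℝ) (w : X → ℝ) :
    Option.elim' r w ∘ (fun y => if y = x then none else some y) = Function.update w x r := by
  funext y
  by_cases hy : y = x <;> simp [hy]

/-- Reset of `x`: the old value of `x` becomes the eliminated variable, the new one is `0`. -/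
noncomputable def resetBounds (x : X) (S : Finset (DiffBound X)) : Finset (DiffBound X) :=
  insert ⟨some x, none, false, 0⟩
    (eliminate (insert freshNonneg (S.image (map fun y => if y = x then none else some y))))

lemma resetSet_singleton_zone (x : X) (S : Finset (DiffBound X)) :
    resetSet {x} (zone S) = zone (resetBounds x S) := by
  ext v
  have hchar : v ∈ zone (resetBounds x S) ↔
      v x = 0 ∧ ∃ r, 0 ≤ r ∧ ∀ d ∈ S, d.Holds (Function.update (fun y => (v y : ℝ)) x r) := by
    simp only [zone, resetBounds, Set.mem_ofPred_eq, Finset.forall_mem_insert, holds_le_zero_iff,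
      holds_eliminate_iff, holds_freshNonneg_iff, Finset.forall_mem_image, holds_map,
      elim'_comp_rename]
  rw [hchar]
  constructor
  · rintro ⟨u, hu, rfl⟩
    refine ⟨by simp [resetVal], u x, (u x).coe_nonneg, ?_⟩
    intro d hd
    convert hu d hd using 2 with y
    by_cases hy : y = x <;> simp [resetVal, hy]
  · rintro ⟨hvx, r, hr, hS⟩
    refine ⟨Function.update v x r.toNNReal, ?_, ?_⟩
    · intro d hd
      convert hS d hd using 2 with y
      by_cases hy : y = x <;> simp [hy, hr]
    · funext y
      by_cases hy : y = x <;> simp [resetVal, hy, hvx]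

def shift (d : DiffBound X) : DiffBound (Option X) := ⟨some d.lhs, some d.rhs, d.strict, d.bound⟩

lemma holds_shift (d : DiffBound X) (δ : ℝ) (w : X → ℝ) :
    d.shift.Holds (Option.elim' δ w) ↔ d.Holds fun x => w x - δ := by
  obtain ⟨_ | a, _ | b, s, c⟩ := d <;> simp [shift, Holds]

/-- Time elapse: a valuation `v` is `u + δ` with `u = v - δ`, and `δ` becomes the
eliminated variable, subject to `0 ≤ δ ≤ v x` for every clock `x`. -/
noncomputable def futureBounds [Fintype X] (S : Finset (DiffBound X)) : Finset (DiffBound X) :=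
  eliminate (insert freshNonneg
    (S.image shift ∪ Finset.univ.image fun x => ⟨some none, some (some x), false, 0⟩))

lemma future_zone [Fintype X] (S : Finset (DiffBound X)) :
    future (zone S) = zone (futureBounds S) := by
  ext v
  have hchar : v ∈ zone (futureBounds S) ↔
      ∃ δ, 0 ≤ δ ∧ (∀ d ∈ S, d.Holds fun x => v x - δ) ∧ ∀ x, δ ≤ v x := by
    simp only [zone, futureBounds, Set.mem_ofPred_eq, holds_eliminate_iff,
      Finset.forall_mem_insert, holds_freshNonneg_iff, Finset.forall_mem_union,
      Finset.forall_mem_image, holds_shift, Finset.mem_univ, true_implies]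
    simp [Holds, LtOrLe]
  rw [hchar]
  constructor
  · rintro ⟨u, hu, δ, rfl⟩
    exact ⟨δ, δ.coe_nonneg, fun d hd => by simpa [addVal] using hu d hd, fun x => by simp [addVal]⟩
  · rintro ⟨δ, hδ, hS, hle⟩
    refine ⟨fun x => (v x - δ).toNNReal, fun d hd => ?_, δ.toNNReal, ?_⟩
    · convert hS d hd using 2 with x
      exact Real.coe_toNNReal _ (sub_nonneg.2 (hle x))
    · ext x
      simp [addVal, Real.coe_toNNReal _ (sub_nonneg.2 (hle x)), hδ]

end DiffBound

lemma IsDiffZone.inter_sem {W : Set (Val X)} (h : IsDiffZone W) (g : ClockConstraint X) :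
    IsDiffZone (W ∩ sem g) := by
  obtain ⟨S, rfl⟩ := h
  exact ⟨S ∪ DiffBound.ofConstraint g, by
    rw [DiffBound.zone_union, DiffBound.sem_eq_zone_ofConstraint]⟩

lemma resetSet_empty (W : Set (Val X)) : resetSet ∅ W = W := by
  have : resetVal (∅ : Set X) = id := by
    funext v x
    simp [resetVal]
  simp [resetSet, this]

lemma resetSet_insert (x : X) (Y : Set X) (W : Set (Val X)) :
    resetSet (insert x Y) W = resetSet {x} (resetSet Y W) := by
  rw [resetSet, resetSet, resetSet, ← Set.image_comp]
  congr 1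
  funext v y
  by_cases hx : y = x <;> by_cases hY : y ∈ Y <;> simp [resetVal, hx, hY]

lemma IsDiffZone.resetSet {W : Set (Val X)} (h : IsDiffZone W) {Y : Set X} (hY : Y.Finite) :
    IsDiffZone (resetSet Y W) := by
  induction Y, hY using Set.Finite.induction_on with
  | empty => rwa [resetSet_empty]
  | @insert x Y _ _ ih =>
    obtain ⟨S, hS⟩ := ih
    exact ⟨_, by rw [resetSet_insert, hS, DiffBound.resetSet_singleton_zone]⟩

lemma IsDiffZone.future [Fintype X] {W : Set (Val X)} (h : IsDiffZone W) :
    IsDiffZone (future W) := by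
  obtain ⟨S, rfl⟩ := h
  exact ⟨_, DiffBound.future_zone S⟩

lemma post_eq_future_resetSet {Q : Type} (q q' : Q) (g : ClockConstraint X) (Y : Set X)
    (W : Set (Val X)) : Post (q, g, Y, q') W = future (resetSet Y (W ∩ sem g)) := by
  ext w
  constructor
  · rintro ⟨v, hv, δ, hg, rfl⟩
    exact ⟨resetVal Y v, ⟨v, ⟨hv, hg⟩, rfl⟩, δ, rfl⟩
  · rintro ⟨_, ⟨v, ⟨hv, hg⟩, rfl⟩, δ, rfl⟩
    exact ⟨v, hv, δ, hg, rfl⟩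

lemma IsDiffZone.post [Fintype X] {Q : Type} {W : Set (Val X)} (h : IsDiffZone W)
    (t : Q × ClockConstraint X × Set X × Q) : IsDiffZone (Post t W) := by
  obtain ⟨q, g, Y, q'⟩ := t
  rw [post_eq_future_resetSet]
  exact ((h.inter_sem g).resetSet Y.toFinite).future

lemma isDiffZone_initZone [Fintype X] : IsDiffZone (initZone X) := by
  refine IsDiffZone.future ⟨Finset.univ.image fun x => ⟨some x, none, false, 0⟩, ?_⟩
  ext v
  simp only [Set.mem_singleton_iff, DiffBound.zone, Set.mem_ofPred_eq, Finset.forall_mem_image,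
    Finset.mem_univ, true_implies, DiffBound.holds_le_zero_iff, funext_iff, zeroVal]

end Zones

section Completeness

variable {Q X : Type}

lemma post_mono (t : Q × ClockConstraint X × Set X × Q) {W W' : Set (Val X)} (h : W ⊆ W') :
    Post t W ⊆ Post t W' := by
  rintro w ⟨v, hv, δ, hg, rfl⟩
  exact ⟨v, h hv, δ, hg, rfl⟩

lemma addVal_zero (v : Val X) : addVal v 0 = v := by
  funext x
  simp [addVal]

lemma addVal_addVal (v : Val X) (δ δ' : NNReal) : addVal (addVal v δ) δ' = addVal v (δ + δ') := by
  funext x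
  simp [addVal, add_assoc]

lemma zeroVal_mem_initZone : zeroVal X ∈ initZone X := ⟨zeroVal X, rfl, 0, (addVal_zero _).symm⟩

lemma SymbReach.addVal_mem {A : Automaton Q X} {c : Q × Set (Val X)} (h : SymbReach A c)
    {v : Val X} (hv : v ∈ c.2) (δ : NNReal) : addVal v δ ∈ c.2 := by
  induction h with
  | init =>
    obtain ⟨u, hu, δ₀, rfl⟩ := hv
    exact ⟨u, hu, δ₀ + δ, addVal_addVal u δ₀ δ⟩
  | step _ _ _ =>
    obtain ⟨u, hu, δ₀, hg, rfl⟩ := hv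
    exact ⟨u, hu, δ₀ + δ, hg, addVal_addVal _ δ₀ δ⟩

lemma Reachable.exists_symbReach {A : Automaton Q X} {c : Q × Val X} (h : Reachable A c) :
    ∃ Z, SymbReach A (c.1, Z) ∧ c.2 ∈ Z := by
  induction h with
  | refl => exact ⟨initZone X, .init, zeroVal_mem_initZone⟩
  | tail _ hstep ih =>
    obtain ⟨Z, hZ, hv⟩ := ih
    cases hstep with
    | delay q v δ => exact ⟨Z, hZ, hZ.addVal_mem hv δ⟩
    | @disc q v g Y q' ht hg =>
      have hpost : resetVal Y v ∈ Post (q, g, Y, q') Z := ⟨v, hv, 0, hg, (addVal_zero _).symm⟩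
      exact ⟨_, .step hZ ht (Set.nonempty_iff_ne_empty.1 ⟨_, hpost⟩), hpost⟩

theorem SymbReach.exists_subset_of_extraSaturated [Fintype X] {A : Automaton Q X}
    {extra : Q → Set (Val X) → Set (Val X)}
    (hextra : ∀ q Z, IsZone Z → Z ≠ ∅ → Z ⊆ extra q Z)
    {N : Set (Q × Set (Val X))} (hNz : ∀ p ∈ N, IsZone p.2) (hN : ExtraSaturated A extra N)
    {c : Q × Set (Val X)} (h : SymbReach A c) : ∃ Z'', (c.1, Z'') ∈ N ∧ c.2 ⊆ Z'' := by
  induction h with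
  | init =>
    obtain ⟨Z'', hZ''N, hextra_sub⟩ := hN.1
    have hinit : IsZone (initZone X) := isDiffZone_initZone.isZone ⟨_, zeroVal_mem_initZone⟩
    exact ⟨Z'', hZ''N,
      (hextra _ _ hinit (Set.nonempty_iff_ne_empty.1 ⟨_, zeroVal_mem_initZone⟩)).trans hextra_sub⟩
  | @step q Z g Y q' _ ht hne ih =>
    obtain ⟨Z'', hZ''N, hZZ''⟩ := ih
    have hsub := post_mono (q, g, Y, q') hZZ''
    have hne'' : Post (q, g, Y, q') Z'' ≠ ∅ := fun h => hne (Set.subset_eq_empty hsub h)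
    have hzone : IsZone (Post (q, g, Y, q') Z'') :=
      ((hNz _ hZ''N).isDiffZone.post _).isZone (Set.nonempty_iff_ne_empty.2 hne'')
    obtain ⟨Z₃, hZ₃N, hextra_sub⟩ := hN.2 q Z'' hZ''N g Y q' ht hne''
    exact ⟨Z₃, hZ₃N, hsub.trans ((hextra _ _ hzone hne'').trans hextra_sub)⟩

end Completeness

end Timed

theorem extrapolation_preserves_completeness_general {Q X : Type} [Fintype X]
    (A : Automaton Q X)
    (extra : Q → Set (Val X) → Set (Val X))
    (hextra : ∀ (q : Q) (Z : Set (Val X)), IsZone Z → Z ≠ ∅ →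
      IsZone (extra q Z) ∧ Z ⊆ extra q Z)
    (N : Set (Q × Set (Val X))) (hNz : ∀ p ∈ N, IsZone p.2 ∧ p.2 ≠ ∅)
    (hN : ExtraSaturated A extra N) :
    (∀ (q : Q) (Z : Set (Val X)), SymbReach A (q, Z) →
      ∃ Z'', (q, Z'') ∈ N ∧ Z ⊆ Z'') ∧
    (∀ (q : Q) (v : Val X), Reachable A (q, v) →
      ∃ Z'', (q, Z'') ∈ N ∧ v ∈ Z'') := by
  have symbolic {c : Q × Set (Val X)} (h : SymbReach A c) : ∃ Z'', (c.1, Z'') ∈ N ∧ c.2 ⊆ Z'' :=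
    h.exists_subset_of_extraSaturated (fun q Z hZ hne => (hextra q Z hZ hne).2)
      (fun p hp => (hNz p hp).1) hN
  refine ⟨fun q Z h => symbolic h, fun q v h => ?_⟩
  obtain ⟨Z, hZ, hv⟩ := h.exists_symbReach
  obtain ⟨Z'', hZ''N, hZZ''⟩ := symbolic hZ
  exact ⟨Z'', hZ''N, hZZ'' hv⟩

/-- completeness is preserved by extrapolation. -/
theorem extrapolation_preserves_completeness {Q X : Type} [Fintype Q] [Fintype X]
    (A : Automaton Q X) (hT : A.trans.Finite)
    (extra : Q → Set (Val X) → Set (Val X))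
    (hextra : ∀ (q : Q) (Z : Set (Val X)), IsZone Z → Z ≠ ∅ →
      IsZone (extra q Z) ∧ Z ⊆ extra q Z)
    (N : Set (Q × Set (Val X))) (hNz : ∀ p ∈ N, IsZone p.2 ∧ p.2 ≠ ∅)
    (hN : ExtraSaturated A extra N) :
    (∀ (q : Q) (Z : Set (Val X)), SymbReach A (q, Z) →
      ∃ Z'', (q, Z'') ∈ N ∧ Z ⊆ Z'') ∧
    (∀ (q : Q) (v : Val X), Reachable A (q, v) →
      ∃ Z'', (q, Z'') ∈ N ∧ v ∈ Z'') :=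
  extrapolation_preserves_completeness_general A extra hextra N hNz hN
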